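/- Let U be a type and C : U → Set U with u ∈ C(u) for every u (unit-diagonal connectivity). Call a nonempty finite subset Z ⊆ U a cluster if for every nonempty proper subset Y ⊊ Z one has C^T(Y) ∩ C^T(Z∖Y) ≠ ∅, where C^T(Z) = ⋃_{a∈Z} C(a). Define the extended cooperation graph whose vertices are the clusters, two distinct clusters Z, Z' being adjacent iff C^T(Z) ∩ C^T(Z') = ∅. Then the map sending a finite clique 𝔷 of this graph to the union ⋃_{Z∈𝔷} Z is a bijection between the finite cliques of the extended cooperation graph and the finite subsets of U. -/

import Mathlib

/-!
Inside a finite set `A`, call two devices linked when they are joined by a chain of devices of `A`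
whose consecutive coverage zones meet. The linked classes of `A` are clusters with pairwise
disjoint total coverage zones, so they form a clique with union `A`. Conversely, the clusters of
a clique with union `A` are exactly these classes: a cluster cannot be split into coverage-disjoint
parts, so it lies in one class, and a chain cannot leave a cluster of the clique because the
other clusters' coverage zones are disjoint from its own. Hence taking linked classes inverts
taking unions.
-/

/-- A cluster is a nonempty finite coverage-connected set of devices: it cannot
be split into two nonempty sub-clusters with disjoint total coverage zones
`C^T(Z) = ⋃_{a∈Z} C(a)`. -/
def IsCluster {U : Type*} [DecidableEq U] (C : U → Set U) (Z : Finset U) : Prop :=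
  Z.Nonempty ∧ ∀ Y : Finset U, Y ⊆ Z → Y.Nonempty → Y ≠ Z →
    ((⋃ a ∈ Y, C a) ∩ (⋃ a ∈ Z \ Y, C a)).Nonempty

/-- The extended cooperation graph: vertices are the clusters, two distinct
clusters being adjacent iff their total coverage zones are disjoint. -/
def extendedCooperationGraph {U : Type*} [DecidableEq U] (C : U → Set U) :
    SimpleGraph {Z : Finset U // IsCluster C Z} where
  Adj Z Z' := Z ≠ Z' ∧ (⋃ a ∈ Z.1, C a) ∩ (⋃ a ∈ Z'.1, C a) = ∅
  symm := by
    refine ⟨?_⟩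
    intro Z Z' h
    exact ⟨h.1.symm, by rw [Set.inter_comm]; exact h.2⟩
  loopless := by
    refine ⟨?_⟩
    intro Z h
    exact h.1 rfl

namespace Coverage

variable {U : Type*} {C : U → Set U} {A : Finset U} {a b : U}

variable (C) in
def Overlap (A : Finset U) (a b : U) : Prop :=
  a ∈ A ∧ b ∈ A ∧ (C a ∩ C b).Nonempty

variable (C) in
def Linked (A : Finset U) : U → U → Prop :=
  Relation.ReflTransGen (Overlap C A)

theorem Overlap.symm (h : Overlap C A a b) : Overlap C A b a :=
  ⟨h.2.1, h.1, Set.inter_comm (C a) (C b) ▸ h.2.2⟩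

instance : Std.Symm (Overlap C A) := ⟨fun _ _ => Overlap.symm⟩

theorem Linked.symm (h : Linked C A a b) : Linked C A b a :=
  Std.Symm.symm (r := Relation.ReflTransGen (Overlap C A)) _ _ h

theorem Linked.trans {c : U} (hab : Linked C A a b) (hbc : Linked C A b c) : Linked C A a c :=
  Relation.ReflTransGen.trans hab hbc

theorem Linked.mono {B : Finset U} (hAB : A ⊆ B) (h : Linked C A a b) : Linked C B a b :=
  Relation.ReflTransGen.mono (fun _ _ (h : Overlap C A _ _) => ⟨hAB h.1, hAB h.2.1, h.2.2⟩)
    _ _ h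

theorem Linked.mem_of_closed {Y : Finset U} (hY : ∀ c ∈ Y, ∀ d, Overlap C A c d → d ∈ Y)
    (ha : a ∈ Y) (h : Linked C A a b) : b ∈ Y := by
  induction h with
  | refl => exact ha
  | tail _ hcd ih => exact hY _ ih _ hcd

theorem overlap_of_mem_biUnion {Y Z : Finset U} {x : U} (hY : Y ⊆ A) (hZ : Z ⊆ A)
    (hxY : x ∈ ⋃ c ∈ Y, C c) (hxZ : x ∈ ⋃ d ∈ Z, C d) :
    ∃ c ∈ Y, ∃ d ∈ Z, Overlap C A c d := by
  simp only [Set.mem_iUnion] at hxY hxZ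
  obtain ⟨c, hc, hxc⟩ := hxY
  obtain ⟨d, hd, hxd⟩ := hxZ
  exact ⟨c, hc, d, hd, hY hc, hZ hd, x, hxc, hxd⟩

open scoped Classical in
variable (C) in
noncomputable def component (A : Finset U) (a : U) : Finset U :=
  A.filter (Linked C A a)

theorem mem_component : b ∈ component C A a ↔ b ∈ A ∧ Linked C A a b := by
  classical
  exact Finset.mem_filter

theorem component_subset : component C A a ⊆ A := fun _ hb => (mem_component.1 hb).1

theorem mem_component_self (ha : a ∈ A) : a ∈ component C A a :=
  mem_component.2 ⟨ha, Relation.ReflTransGen.refl⟩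

theorem mem_component_of_overlap {c d : U} (hc : c ∈ component C A a) (hcd : Overlap C A c d) :
    d ∈ component C A a :=
  mem_component.2 ⟨hcd.2.1, (mem_component.1 hc).2.tail hcd⟩

theorem component_eq_of_linked (h : Linked C A a b) : component C A a = component C A b := by
  ext x
  simp only [mem_component]
  exact ⟨fun hx => ⟨hx.1, h.symm.trans hx.2⟩, fun hx => ⟨hx.1, h.trans hx.2⟩⟩

theorem linked_component (h : Linked C A a b) : Linked C (component C A a) a b := by
  induction h with
  | refl => exact Relation.ReflTransGen.refl
  | tail hac hcd ih =>
    exact ih.tail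
      ⟨mem_component.2 ⟨hcd.1, hac⟩, mem_component.2 ⟨hcd.2.1, hac.tail hcd⟩, hcd.2.2⟩

section Clusters

variable [DecidableEq U]

theorem _root_.IsCluster.linked {Z : Finset U} (hZ : IsCluster C Z) (ha : a ∈ Z) (hb : b ∈ Z) :
    Linked C Z a b := by
  by_cases hY : component C Z a = Z
  · exact (mem_component.1 (hY.symm ▸ hb)).2
  obtain ⟨x, hxY, hxZY⟩ :=
    hZ.2 _ component_subset ⟨a, mem_component_self ha⟩ hY
  obtain ⟨c, hc, d, hd, hcd⟩ :=
    overlap_of_mem_biUnion component_subset Finset.sdiff_subset hxY hxZY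
  exact absurd (mem_component_of_overlap hc hcd) (Finset.mem_sdiff.1 hd).2

theorem isCluster_of_linked {Z : Finset U} (hne : Z.Nonempty)
    (hZ : ∀ a ∈ Z, ∀ b ∈ Z, Linked C Z a b) : IsCluster C Z := by
  refine ⟨hne, fun Y hYZ ⟨a, ha⟩ hYne => ?_⟩
  obtain ⟨b, hbZ, hbY⟩ :=
    Finset.exists_of_ssubset (Finset.ssubset_iff_subset_ne.2 ⟨hYZ, hYne⟩)
  by_contra hdisj
  refine hbY ((hZ a (hYZ ha) b hbZ).mem_of_closed (fun c hc d hcd => ?_) ha)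
  by_contra hdY
  exact hdisj ⟨_, Set.mem_biUnion hc hcd.2.2.some_mem.1,
    Set.mem_biUnion (Finset.mem_sdiff.2 ⟨hcd.2.1, hdY⟩) hcd.2.2.some_mem.2⟩

theorem isCluster_component (ha : a ∈ A) : IsCluster C (component C A a) :=
  isCluster_of_linked ⟨a, mem_component_self ha⟩ fun _ hb _ hc =>
    (linked_component (mem_component.1 hb).2).symm.trans (linked_component (mem_component.1 hc).2)

variable (C) in
noncomputable def components (A : Finset U) : Finset {Z : Finset U // IsCluster C Z} :=
  A.attach.image fun a => ⟨component C A a.1, isCluster_component a.2⟩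

theorem mem_components {Z : {Z : Finset U // IsCluster C Z}} :
    Z ∈ components C A ↔ ∃ a ∈ A, Z.1 = component C A a := by
  simp only [components, Finset.mem_image, Finset.mem_attach, true_and, Subtype.exists]
  constructor
  · rintro ⟨a, ha, rfl⟩
    exact ⟨a, ha, rfl⟩
  · rintro ⟨a, ha, hZ⟩
    exact ⟨a, ha, Subtype.ext hZ.symm⟩

theorem biUnion_components : (components C A).biUnion (fun Z => Z.1) = A := by
  ext x
  simp only [Finset.mem_biUnion, mem_components]
  constructor
  · rintro ⟨Z, ⟨a, -, hZ⟩, hx⟩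
    exact component_subset (hZ ▸ hx)
  · intro hx
    exact ⟨⟨_, isCluster_component hx⟩, ⟨x, hx, rfl⟩, mem_component_self hx⟩

theorem isClique_components :
    (extendedCooperationGraph C).IsClique
      (components C A : Set {Z : Finset U // IsCluster C Z}) := by
  intro Z hZ Z' hZ' hne
  obtain ⟨a, -, ha⟩ := mem_components.1 hZ
  obtain ⟨b, -, hb⟩ := mem_components.1 hZ'
  refine ⟨hne, Set.not_nonempty_iff_eq_empty.1 fun ⟨x, hxZ, hxZ'⟩ => hne (Subtype.ext ?_)⟩
  rw [ha] at hxZ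
  rw [hb] at hxZ'
  rw [ha, hb]
  obtain ⟨c, hc, d, hd, hcd⟩ :=
    overlap_of_mem_biUnion component_subset component_subset hxZ hxZ'
  exact component_eq_of_linked ((mem_component.1 (mem_component_of_overlap hc hcd)).2.trans
    (mem_component.1 hd).2.symm)

theorem eq_component_of_isClique {𝔷 : Finset {Z : Finset U // IsCluster C Z}}
    (h𝔷 : (extendedCooperationGraph C).IsClique (𝔷 : Set {Z : Finset U // IsCluster C Z}))
    {Z : {Z : Finset U // IsCluster C Z}} (hZ : Z ∈ 𝔷) (ha : a ∈ Z.1) :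
    Z.1 = component C (𝔷.biUnion fun Z => Z.1) a := by
  have hZA : Z.1 ⊆ 𝔷.biUnion fun Z => Z.1 := Finset.subset_biUnion_of_mem _ hZ
  refine Finset.Subset.antisymm
    (fun b hb => mem_component.2 ⟨hZA hb, (Z.2.linked ha hb).mono hZA⟩)
    fun b hb => (mem_component.1 hb).2.mem_of_closed (fun c hc d hcd => ?_) ha
  obtain ⟨Z', hZ', hdZ'⟩ := Finset.mem_biUnion.1 hcd.2.1
  by_contra hd
  have hdisj := (h𝔷 hZ hZ' fun h => hd (h ▸ hdZ')).2
  exact hdisj.subset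
    ⟨Set.mem_biUnion hc hcd.2.2.some_mem.1, Set.mem_biUnion hdZ' hcd.2.2.some_mem.2⟩

theorem components_biUnion_of_isClique {𝔷 : Finset {Z : Finset U // IsCluster C Z}}
    (h𝔷 : (extendedCooperationGraph C).IsClique (𝔷 : Set {Z : Finset U // IsCluster C Z})) :
    components C (𝔷.biUnion fun Z => Z.1) = 𝔷 := by
  ext Z
  rw [mem_components]
  constructor
  · rintro ⟨a, ha, hZ⟩
    obtain ⟨Z', hZ', haZ'⟩ := Finset.mem_biUnion.1 ha
    rwa [Subtype.ext (hZ.trans (eq_component_of_isClique h𝔷 hZ' haZ').symm)]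
  · intro hZ
    obtain ⟨a, ha⟩ := Z.2.1
    exact ⟨a, Finset.mem_biUnion.2 ⟨Z, hZ, ha⟩, eq_component_of_isClique h𝔷 hZ ha⟩

end Clusters

end Coverage

open Coverage in
theorem extended_cooperation_graph_clique_bijection_general {U : Type*} [DecidableEq U]
    (C : U → Set U) :
    Function.Bijective
      (fun 𝔷 : {𝔷 : Finset {Z : Finset U // IsCluster C Z} //
          (extendedCooperationGraph C).IsClique (𝔷 : Set {Z : Finset U // IsCluster C Z})} =>
        (𝔷.1.biUnion (fun Z => Z.1) : Finset U)) := by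
  refine Function.bijective_iff_has_inverse.2
    ⟨fun A => ⟨components C A, isClique_components⟩, fun 𝔷 => ?_, fun A => biUnion_components⟩
  exact Subtype.ext (components_biUnion_of_isClique 𝔷.2)

/-- The map sending a finite clique of the extended cooperation graph to the
union of its clusters is a bijection onto the finite subsets of `U`: every
finite subset `A` of `U` is the union of a unique finite clique of clusters. -/
theorem extended_cooperation_graph_clique_bijection {U : Type*} [DecidableEq U]
    (C : U → Set U) (hrefl : ∀ u, u ∈ C u) :
    Function.Bijective
      (fun 𝔷 : {𝔷 : Finset {Z : Finset U // IsCluster C Z} //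
          (extendedCooperationGraph C).IsClique (𝔷 : Set {Z : Finset U // IsCluster C Z})} =>
        (𝔷.1.biUnion (fun Z => Z.1) : Finset U)) :=
  extended_cooperation_graph_clique_bijection_general C
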